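/- One-step discrete energy dissipation for the stabilized semi-implicit scheme: let (X, m) be a finite measure space, V a linear subspace of L²(X, m; ℝ), and a : V × V → ℝ a symmetric bilinear form with a(v, v) ≥ 0 for all v ∈ V. Fix K ≥ 1, L = 3K² − 1, the regularized double-well potential f₀, reals M > 0, τ > 0, ε ∈ ℝ, and β_s ≥ L/2. Suppose c⁰, c¹, μ₁ ∈ V satisfy (i) ∫(c¹ − c⁰)·v dm = −Mτ·a(μ₁, v) for all v ∈ V, and (ii) ∫ μ₁·q dm = β_s∫(c¹ − c⁰)·q dm + ∫ f₀'(c⁰)·q dm + ε²·a(c¹, q) for all q ∈ V. Define the discrete energy E(c) = (ε²/2)·a(c, c) + ∫ f₀(c) dm. Then E(c¹) − E(c⁰) + (ε²/2)·a(c¹ − c⁰, c¹ − c⁰) + Mτ·a(μ₁, μ₁) ≤ 0; in particular E(c¹) ≤ E(c⁰). -/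

import Mathlib

/-!
Test (i) with μ₁ and (ii) with c¹ - c⁰. For symmetric `a`,
2 a(c¹, c¹ - c⁰) = a(c¹, c¹) - a(c⁰, c⁰) + a(c¹ - c⁰, c¹ - c⁰), which turns the bilinear terms into
the energy difference plus numerical dissipation. Since f₀'' ≤ L, the potential obeys the one-sided
Taylor bound f₀(b) ≤ f₀(a) + f₀'(a)(b - a) + (L/2)(b - a)², and the explicit treatment of f₀' is paid
for by the stabilization term, because β_s ≥ L/2.
-/

open MeasureTheory

/-- The regularized Landau–Lifshitz double-well potential with cutoff parameter `K`. -/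
noncomputable def f0 (K c : ℝ) : ℝ :=
  if K < c then (3*K^2 - 1)/2 * c^2 - 2*K^3*c + (3*K^4 + 1)/4
  else if c < -K then (3*K^2 - 1)/2 * c^2 + 2*K^3*c + (3*K^4 + 1)/4
  else ((c^2 - 1)^2)/4

/-- Its derivative. -/
noncomputable def f0' (K c : ℝ) : ℝ :=
  if K < c then (3*K^2 - 1)*c - 2*K^3
  else if c < -K then (3*K^2 - 1)*c + 2*K^3
  else c^3 - c

/-- The discrete energy `E(c) = (ε²/2)·a(c,c) + ∫ f₀(c) dm`. -/
noncomputable def discreteEnergy {X : Type*} [MeasurableSpace X] {m : Measure X}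
    (K ε : ℝ) {V : Submodule ℝ (Lp ℝ 2 m)} (a : V →ₗ[ℝ] V →ₗ[ℝ] ℝ) (c : V) : ℝ :=
  ε^2/2 * a c c + ∫ x, f0 K ((c : Lp ℝ 2 m) x) ∂m

section Potential

variable {K : ℝ}

theorem f0_nonneg (hK : 1 ≤ K) (c : ℝ) : 0 ≤ f0 K c := by
  have hK3 : 0 ≤ K^3 - K := by
    nlinarith [mul_nonneg (by linarith : 0 ≤ K) (by nlinarith : 0 ≤ K^2 - 1)]
  unfold f0
  split_ifs
  · nlinarith [sq_nonneg (c - K), sq_nonneg (K^2 - 1), mul_nonneg hK3 (by linarith : 0 ≤ c - K)]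
  · nlinarith [sq_nonneg (c + K), sq_nonneg (K^2 - 1), mul_nonneg hK3 (by linarith : 0 ≤ -c - K)]
  · positivity

theorem f0_le (hK : 1 ≤ K) (c : ℝ) : f0 K c ≤ 1/4 + (3*K^2 - 1)/2 * c^2 := by
  have hK3 : 0 < K^3 := by positivity
  unfold f0
  split_ifs
  · nlinarith [mul_pos hK3 (by linarith : 0 < c), sq_nonneg (K^2 - 1)]
  · nlinarith [mul_pos hK3 (by linarith : 0 < -c), sq_nonneg (K^2 - 1)]
  · nlinarith [mul_nonneg (sq_nonneg c) (by nlinarith : 0 ≤ K^2 - c^2), sq_nonneg (K*c)]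

theorem abs_f0'_le (hK : 1 ≤ K) (c : ℝ) : |f0' K c| ≤ (3*K^2 - 1) * |c| := by
  have hK2 : 1 ≤ K^2 := by nlinarith
  have hK3 : K ≤ K^3 := by nlinarith
  have hL : 0 ≤ 3*K^2 - 1 := by linarith
  unfold f0'
  rw [abs_le]
  split_ifs with hpos hneg
  · rw [abs_of_pos (by linarith : 0 < c)]
    constructor <;> nlinarith [mul_le_mul_of_nonneg_left hpos.le hL]
  · rw [abs_of_neg (by linarith : c < 0)]
    constructor <;> nlinarith [mul_le_mul_of_nonneg_left hneg.le hL]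
  · rcases le_or_gt 0 c with hc | hc
    · rw [abs_of_nonneg hc]
      constructor <;> nlinarith [mul_nonneg hc (by nlinarith : 0 ≤ K^2 - c^2),
        mul_nonneg hc (by nlinarith : 0 ≤ c^2 + 3*K^2 - 2)]
    · rw [abs_of_neg hc]
      constructor <;> nlinarith [mul_nonneg (neg_nonneg.2 hc.le) (by nlinarith : 0 ≤ K^2 - c^2),
        mul_nonneg (neg_nonneg.2 hc.le) (by nlinarith : 0 ≤ c^2 + 3*K^2 - 2)]

theorem f0_le_taylor (hK : 1 ≤ K) (a b : ℝ) :
    f0 K b ≤ f0 K a + f0' K a * (b - a) + (3*K^2 - 1)/2 * (b - a)^2 := by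
  have hK3 : 0 < K^3 := by positivity
  -- Off [-K, K], f0 is the second-order Taylor polynomial of (c² - 1)²/4 at ±K, so each case
  -- reduces to a factored quartic remainder, e.g. -(b - K)³(b + 3K)/4 for a > K ≥ b ≥ -K.
  unfold f0 f0'
  split_ifs
  · nlinarith [sq_nonneg (b - a)]
  · nlinarith [sq_nonneg (b - a)]
  · nlinarith [mul_nonneg (sub_nonneg.2 ‹K < b›.le)
        (mul_nonneg (sq_nonneg (a - K)) (by linarith : 0 ≤ a + 2*K)),
      mul_nonneg (sq_nonneg (K - a))
        (mul_nonneg (sub_nonneg.2 (not_lt.1 ‹¬K < a›)) (by linarith : 0 ≤ 5*K + 3*a))]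
  · nlinarith [sq_nonneg (b - a)]
  · nlinarith [sq_nonneg (b - a)]
  · nlinarith [mul_nonneg (by linarith : 0 ≤ -b - K)
        (mul_nonneg (sq_nonneg (a + K)) (by linarith : 0 ≤ 2*K - a)),
      mul_nonneg (sq_nonneg (K + a))
        (mul_nonneg (by linarith : 0 ≤ K + a) (by linarith : 0 ≤ 5*K - 3*a))]
  · nlinarith [mul_nonneg (pow_nonneg (sub_nonneg.2 (not_lt.1 ‹¬K < b›)) 3)
      (by linarith : 0 ≤ b + 3*K)]
  · nlinarith [mul_nonneg (pow_nonneg (by linarith : 0 ≤ b + K) 3) (by linarith : 0 ≤ 3*K - b)]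
  · nlinarith [sq_nonneg (b - a), sq_nonneg (a + b), sq_nonneg ((b - a) * (a + b)),
      mul_nonneg (sub_nonneg.2 (not_lt.1 ‹¬K < b›)) (by linarith : 0 ≤ b + K),
      mul_nonneg (sub_nonneg.2 (not_lt.1 ‹¬K < a›)) (by linarith : 0 ≤ a + K)]

end Potential

theorem measurable_f0 (K : ℝ) : Measurable (f0 K) :=
  Measurable.ite (measurableSet_lt measurable_const measurable_id) (by fun_prop)
    (Measurable.ite (measurableSet_lt measurable_id measurable_const) (by fun_prop) (by fun_prop))

theorem measurable_f0' (K : ℝ) : Measurable (f0' K) :=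
  Measurable.ite (measurableSet_lt measurable_const measurable_id) (by fun_prop)
    (Measurable.ite (measurableSet_lt measurable_id measurable_const) (by fun_prop) (by fun_prop))

section Integrability

variable {X : Type*} [MeasurableSpace X] {m : Measure X} {K : ℝ} {g : X → ℝ}

theorem MeasureTheory.MemLp.integrable_f0_comp [IsFiniteMeasure m] (hK : 1 ≤ K)
    (hg : MemLp g 2 m) : Integrable (fun x => f0 K (g x)) m := by
  refine ((integrable_const (1/4 : ℝ)).add (hg.integrable_sq.const_mul ((3*K^2 - 1)/2))).mono'
    ((measurable_f0 K).comp_aemeasurable hg.aemeasurable).aestronglyMeasurable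
    (.of_forall fun x => ?_)
  rw [Real.norm_of_nonneg (f0_nonneg hK _)]
  exact f0_le hK (g x)

theorem MeasureTheory.MemLp.f0'_comp (hK : 1 ≤ K) (hg : MemLp g 2 m) :
    MemLp (fun x => f0' K (g x)) 2 m := by
  refine (hg.const_mul (3*K^2 - 1)).of_le
    ((measurable_f0' K).comp_aemeasurable hg.aemeasurable).aestronglyMeasurable
    (.of_forall fun x => ?_)
  have hL : 0 ≤ 3*K^2 - 1 := by nlinarith
  simpa only [norm_mul, Real.norm_eq_abs, abs_of_nonneg hL] using abs_f0'_le hK (g x)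

end Integrability

theorem MeasureTheory.integral_comp_le_of_le_taylor {X : Type*} [MeasurableSpace X]
    {m : Measure X} {φ φ' : ℝ → ℝ} {C : ℝ}
    (hφ : ∀ a b, φ b ≤ φ a + φ' a * (b - a) + C * (b - a) ^ 2) {g₀ g₁ : X → ℝ}
    (hφg₀ : Integrable (fun x => φ (g₀ x)) m) (hφg₁ : Integrable (fun x => φ (g₁ x)) m)
    (hφ'g₀ : MemLp (fun x => φ' (g₀ x)) 2 m) (hg : MemLp (fun x => g₁ x - g₀ x) 2 m) :
    ∫ x, φ (g₁ x) ∂m ≤ ∫ x, φ (g₀ x) ∂m + ∫ x, φ' (g₀ x) * (g₁ x - g₀ x) ∂m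
      + C * ∫ x, (g₁ x - g₀ x) ^ 2 ∂m := by
  have hlin : Integrable (fun x => φ' (g₀ x) * (g₁ x - g₀ x)) m := hφ'g₀.integrable_mul hg
  have hquad : Integrable (fun x => C * (g₁ x - g₀ x) ^ 2) m := hg.integrable_sq.const_mul C
  have hsum : Integrable (fun x => φ (g₀ x) + φ' (g₀ x) * (g₁ x - g₀ x)) m := hφg₀.add hlin
  calc ∫ x, φ (g₁ x) ∂m
      ≤ ∫ x, φ (g₀ x) + φ' (g₀ x) * (g₁ x - g₀ x) + C * (g₁ x - g₀ x) ^ 2 ∂m :=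
        integral_mono hφg₁ (hsum.add hquad) fun x => hφ (g₀ x) (g₁ x)
    _ = _ := by rw [integral_add hsum hquad, integral_add hφg₀ hlin, integral_const_mul]

theorem LinearMap.two_mul_apply_sub_of_symm {R M : Type*} [CommRing R] [AddCommGroup M]
    [Module R M] (a : M →ₗ[R] M →ₗ[R] R) (ha : ∀ u w, a u w = a w u) (u w : M) :
    2 * a u (u - w) = a u u - a w w + a (u - w) (u - w) := by
  simp only [map_sub, LinearMap.sub_apply, ha w u]
  ring

theorem MeasureTheory.Lp.integral_mul_coeFn_sub {X : Type*} [MeasurableSpace X]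
    {m : Measure X} {p : ENNReal} (u : X → ℝ) (f g : Lp ℝ p m) :
    ∫ x, u x * (f - g : Lp ℝ p m) x ∂m = ∫ x, u x * (f x - g x) ∂m :=
  integral_congr_ae ((Lp.coeFn_sub f g).mono fun x hx => congrArg (u x * ·) hx)

/-- One-step discrete energy dissipation for the stabilized semi-implicit scheme. -/
theorem one_step_energy_dissipation
    {X : Type*} [MeasurableSpace X] (m : Measure X) [IsFiniteMeasure m]
    (K : ℝ) (hK : 1 ≤ K)
    (V : Submodule ℝ (Lp ℝ 2 m)) (a : V →ₗ[ℝ] V →ₗ[ℝ] ℝ)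
    (ha_symm : ∀ u w : V, a u w = a w u)
    (ha_nonneg : ∀ v : V, 0 ≤ a v v)
    (M τ ε βs : ℝ) (hM : 0 < M) (hτ : 0 < τ) (hβ : (3*K^2 - 1)/2 ≤ βs)
    (c0 c1 μ1 : V)
    (h1 : ∀ v : V, ∫ x, ((c1 : Lp ℝ 2 m) x - (c0 : Lp ℝ 2 m) x) * (v : Lp ℝ 2 m) x ∂m
        = -(M * τ) * a μ1 v)
    (h2 : ∀ q : V, ∫ x, (μ1 : Lp ℝ 2 m) x * (q : Lp ℝ 2 m) x ∂m
        = βs * ∫ x, ((c1 : Lp ℝ 2 m) x - (c0 : Lp ℝ 2 m) x) * (q : Lp ℝ 2 m) x ∂m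
          + ∫ x, f0' K ((c0 : Lp ℝ 2 m) x) * (q : Lp ℝ 2 m) x ∂m
          + ε^2 * a c1 q) :
    discreteEnergy K ε a c1 - discreteEnergy K ε a c0
        + ε^2/2 * a (c1 - c0) (c1 - c0) + M * τ * a μ1 μ1 ≤ 0
      ∧ discreteEnergy K ε a c1 ≤ discreteEnergy K ε a c0 := by
  have hscheme := h2 (c1 - c0)
  simp only [Submodule.coe_sub, Lp.integral_mul_coeFn_sub, ← sq] at hscheme
  simp only [mul_comm ((μ1 : Lp ℝ 2 m) _), h1 μ1] at hscheme
  have htaylor := integral_comp_le_of_le_taylor (f0_le_taylor hK)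
    ((Lp.memLp (c0 : Lp ℝ 2 m)).integrable_f0_comp hK)
    ((Lp.memLp (c1 : Lp ℝ 2 m)).integrable_f0_comp hK) ((Lp.memLp _).f0'_comp hK)
    ((Lp.memLp _).sub (Lp.memLp _))
  have hstab := mul_le_mul_of_nonneg_right hβ
    (integral_nonneg (μ := m) fun x => sq_nonneg ((c1 : Lp ℝ 2 m) x - (c0 : Lp ℝ 2 m) x))
  have hpolar := a.two_mul_apply_sub_of_symm ha_symm c1 c0
  have hdissip : discreteEnergy K ε a c1 - discreteEnergy K ε a c0
      + ε^2/2 * a (c1 - c0) (c1 - c0) + M * τ * a μ1 μ1 ≤ 0 := by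
    unfold discreteEnergy
    linear_combination htaylor - hscheme + hstab - ε^2/2 * hpolar
  have hnum := mul_nonneg (sq_nonneg ε) (ha_nonneg (c1 - c0))
  have hmob := mul_nonneg (mul_pos hM hτ).le (ha_nonneg μ1)
  exact ⟨hdissip, by linarith⟩
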